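/- (Lemma 1(iii), Fourier form.) Let d ≥ 1, τ > 0, γ > 0, 0 < δ < ξ ≤ 1, and let Ω ⊆ {ω ∈ ℝ^d : |⟨ω, n⟩| ≥ γ/|n|₁^τ for all nonzero n ∈ ℤ^d}. Let m, λ ≥ 0 and suppose f_n : Ω → ℂ, for n ∈ ℤ^d \ {0}, satisfy |f_n(ω)| ≤ m e^{−|n|₁ ξ} and |f_n(ω) − f_n(ω')| ≤ λ e^{−|n|₁ ξ} ‖ω − ω'‖ for all ω, ω' ∈ Ω. Then the series F(x, ω) = Σ_{n ≠ 0} (f_n(ω)/(i⟨ω, n⟩)) e^{i⟨n, x⟩} converges absolutely for every x ∈ ℂ^d with |Im x_j| ≤ ξ − δ, and there exist constants c, k > 0 depending only on d and τ such that for all such x and all ω, ω' ∈ Ω: |F(x, ω) − F(x, ω')| ≤ c δ^{−k} γ^{−2} (m + λγ) ‖ω − ω'‖. -/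

import Mathlib

/-- Euclidean norm on `Fin d → ℝ`. -/
noncomputable def eNorm {d : ℕ} (v : Fin d → ℝ) : ℝ := Real.sqrt (∑ i, v i ^ 2)

/-- Standard inner product on `Fin d → ℝ`. -/
def dotR {d : ℕ} (v w : Fin d → ℝ) : ℝ := ∑ i, v i * w i

/-- 1-norm of an integer vector, as a real number. -/
def oneNorm {d : ℕ} (n : Fin d → ℤ) : ℝ := ∑ i, |(n i : ℝ)|

/-!
Each term is estimated with the Diophantine bound `|⟨ω, n⟩|⁻¹ ≤ |n|₁^τ / γ`, while the decay
`e^{-|n|₁ ξ}` of `f_n` beats the growth `e^{(ξ - δ)|n|₁}` of `e^{i⟨n, x⟩}` by a factor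
`e^{-δ|n|₁}`. In the difference of two terms, `1/⟨ω, n⟩ - 1/⟨ω', n⟩` costs two small divisors and
a factor `‖ω - ω'‖ |n|₁`, which produces `γ⁻²` and the polynomial weight `|n|₁^(2τ+1)`. Half of
`e^{-δ|n|₁}` absorbs a weight `|n|₁^P` at the price `P! (2/δ)^P`, and the other half sums over
`ℤ^d` to at most `(1 + 4/δ)^d`, being a product of `d` two-sided geometric series.
-/

open Real Finset

lemma pow_le_factorial_div_mul_exp (P : ℕ) {ε x : ℝ} (hε : 0 < ε) (hx : 0 ≤ x) :
    x ^ P ≤ P.factorial / ε ^ P * Real.exp (ε * x) := by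
  have h := Real.pow_div_factorial_le_exp _ (mul_nonneg hε.le hx) P
  rw [div_le_iff₀ (by positivity), mul_pow] at h
  rw [div_mul_eq_mul_div, le_div_iff₀ (by positivity)]
  linarith

lemma rpow_mul_exp_neg_le {q δ N : ℝ} {P : ℕ} (hqP : q ≤ P) (hδ : 0 < δ) (hN : 1 ≤ N) :
    N ^ q * Real.exp (-(δ * N)) ≤ P.factorial * (2 / δ) ^ P * Real.exp (-(δ / 2 * N)) := by
  have hpow : N ^ q ≤ N ^ P := by
    simpa only [rpow_natCast] using rpow_le_rpow_of_exponent_le hN hqP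
  calc N ^ q * Real.exp (-(δ * N))
      ≤ P.factorial / (δ / 2) ^ P * Real.exp (δ / 2 * N) * Real.exp (-(δ * N)) := by
        gcongr
        exact hpow.trans (pow_le_factorial_div_mul_exp P (half_pos hδ) (by linarith))
    _ = P.factorial * (2 / δ) ^ P * Real.exp (-(δ / 2 * N)) := by
        rw [mul_assoc, ← Real.exp_add, div_pow, div_pow, div_div_eq_mul_div]
        ring_nf

lemma hasSum_pow_natAbs {r : ℝ} (h0 : 0 ≤ r) (h1 : r < 1) :
    HasSum (fun k : ℤ => r ^ k.natAbs) ((1 + r) / (1 - r)) := by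
  have hgeom := hasSum_geometric_of_lt_one h0 h1
  have hshift : HasSum (fun n : ℕ => r * r ^ n) (r * (1 - r)⁻¹) := hgeom.mul_left r
  have hpos : HasSum (fun n : ℕ => r ^ (n : ℤ).natAbs) (1 - r)⁻¹ := by
    simpa only [Int.natAbs_natCast] using hgeom
  have hneg : HasSum (fun n : ℕ => r ^ (-(n + 1 : ℤ)).natAbs) (r * (1 - r)⁻¹) := by
    convert hshift using 2 with n
    rw [← pow_succ']
    congr 1
  rw [show (1 + r) / (1 - r) = (1 - r)⁻¹ + r * (1 - r)⁻¹ by ring]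
  exact HasSum.of_nat_of_neg_add_one hpos hneg

lemma HasSum.fin_pi_prod {α : Type*} {w : α → ℝ} {S : ℝ} (hw : HasSum w S) (h0 : 0 ≤ w)
    (d : ℕ) : HasSum (fun n : Fin d → α => ∏ i, w (n i)) (S ^ d) := by
  induction d with
  | zero => simp
  | succ d ih =>
    have hs : Summable fun p : α × (Fin d → α) => w p.1 * ∏ i, w (p.2 i) :=
      Summable.mul_of_nonneg (f := w) (g := fun n : Fin d → α => ∏ i, w (n i))
        hw.summable ih.summable h0 fun _ => prod_nonneg fun _ _ => h0 _
    have hprod : HasSum (fun p : α × (Fin d → α) => w p.1 * ∏ i, w (p.2 i)) (S * S ^ d) :=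
      HasSum.mul (f := w) (g := fun n : Fin d → α => ∏ i, w (n i)) hw ih hs
    rw [pow_succ', ← (Fin.consEquiv fun _ : Fin (d + 1) => α).hasSum_iff]
    convert hprod using 2 with p
    simp [Fin.consEquiv, Fin.prod_univ_succ]

lemma one_add_exp_neg_div_le {ε : ℝ} (hε : 0 < ε) :
    (1 + Real.exp (-ε)) / (1 - Real.exp (-ε)) ≤ 1 + 2 / ε := by
  have hε_le : ε ≤ Real.exp ε - 1 := by linarith [add_one_le_exp ε]
  have hne : Real.exp ε - 1 ≠ 0 := by linarith
  have hrw : (1 + Real.exp (-ε)) / (1 - Real.exp (-ε)) = 1 + 2 / (Real.exp ε - 1) := by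
    rw [Real.exp_neg, eq_comm, ← sub_eq_zero]
    field_simp
    ring
  rw [hrw]
  gcongr

lemma hasSum_exp_neg_oneNorm (d : ℕ) {ε : ℝ} (hε : 0 < ε) :
    HasSum (fun n : Fin d → ℤ => Real.exp (-(ε * oneNorm n)))
      (((1 + Real.exp (-ε)) / (1 - Real.exp (-ε))) ^ d) := by
  have hint : HasSum (fun k : ℤ => Real.exp (-(ε * |(k : ℝ)|)))
      ((1 + Real.exp (-ε)) / (1 - Real.exp (-ε))) := by
    convert hasSum_pow_natAbs (exp_pos (-ε)).le (exp_lt_one_iff.2 (neg_lt_zero.2 hε))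
      using 2 with k
    rw [← Real.exp_nat_mul, Nat.cast_natAbs, Int.cast_abs]
    ring_nf
  convert hint.fin_pi_prod (fun _ => (exp_pos _).le) d using 2 with n
  rw [← Real.exp_sum, oneNorm, mul_sum, ← sum_neg_distrib]

lemma tsum_exp_neg_oneNorm_le (d : ℕ) {ε : ℝ} (hε : 0 < ε) :
    ∑' n : Fin d → ℤ, Real.exp (-(ε * oneNorm n)) ≤ (1 + 2 / ε) ^ d := by
  have hpos : 0 ≤ (1 + Real.exp (-ε)) / (1 - Real.exp (-ε)) :=
    div_nonneg (by positivity) (sub_nonneg.2 (exp_le_one_iff.2 (by linarith)))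
  rw [(hasSum_exp_neg_oneNorm d hε).tsum_eq]
  exact pow_le_pow_left₀ hpos (one_add_exp_neg_div_le hε) d

section Norms

variable {d : ℕ}

lemma oneNorm_nonneg (n : Fin d → ℤ) : 0 ≤ oneNorm n :=
  sum_nonneg fun _ _ => abs_nonneg _

lemma one_le_oneNorm {n : Fin d → ℤ} (hn : n ≠ 0) : 1 ≤ oneNorm n := by
  obtain ⟨i, hi⟩ := Function.ne_iff.1 hn
  calc (1 : ℝ) ≤ |(n i : ℝ)| := by exact_mod_cast Int.one_le_abs hi
    _ ≤ oneNorm n :=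
      single_le_sum (f := fun j => |(n j : ℝ)|) (fun _ _ => abs_nonneg _) (mem_univ i)

lemma eNorm_nonneg (v : Fin d → ℝ) : 0 ≤ eNorm v :=
  sqrt_nonneg _

lemma abs_le_eNorm (v : Fin d → ℝ) (i : Fin d) : |v i| ≤ eNorm v := by
  rw [eNorm, ← sqrt_sq_eq_abs]
  exact sqrt_le_sqrt (single_le_sum (f := fun j => v j ^ 2) (fun _ _ => sq_nonneg _) (mem_univ i))

lemma abs_dotR_le (v : Fin d → ℝ) (n : Fin d → ℤ) :
    |dotR v fun i => (n i : ℝ)| ≤ eNorm v * oneNorm n := by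
  rw [dotR, oneNorm, mul_sum]
  refine (abs_sum_le_sum_abs _ _).trans (sum_le_sum fun i _ => ?_)
  rw [abs_mul]
  exact mul_le_mul_of_nonneg_right (abs_le_eNorm v i) (abs_nonneg _)

lemma dotR_sub_left (v v' w : Fin d → ℝ) : dotR (v - v') w = dotR v w - dotR v' w := by
  simp only [dotR, ← sum_sub_distrib, Pi.sub_apply, sub_mul]

end Norms

section ComplexBounds

open Complex

variable {d : ℕ}

lemma norm_cexp_I_mul_sum_le (n : Fin d → ℤ) {x : Fin d → ℂ} {b : ℝ}
    (hx : ∀ j, |(x j).im| ≤ b) :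
    ‖cexp (I * ∑ i, (n i : ℂ) * x i)‖ ≤ Real.exp (b * oneNorm n) := by
  have hre : (I * ∑ i, (n i : ℂ) * x i).re = ∑ i, -((n i : ℝ) * (x i).im) := by
    simp [mul_re]
  rw [norm_exp, Real.exp_le_exp, hre, oneNorm, mul_sum]
  refine sum_le_sum fun i _ => ?_
  calc -((n i : ℝ) * (x i).im) ≤ |(n i : ℝ)| * |(x i).im| := by
        rw [← abs_mul]; exact neg_le_abs _
    _ ≤ b * |(n i : ℝ)| := by rw [mul_comm]; gcongr; exact hx i

lemma norm_div_I_mul (u E : ℂ) (a : ℝ) : ‖u / (I * a) * E‖ = |a|⁻¹ * (‖u‖ * ‖E‖) := by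
  rw [norm_mul, norm_div, norm_mul, norm_I, norm_real, Real.norm_eq_abs, one_mul, div_eq_inv_mul,
    mul_assoc]

lemma norm_div_I_mul_sub_le (u u' E : ℂ) {a a' : ℝ} (ha : a ≠ 0) (ha' : a' ≠ 0) :
    ‖u / (I * a) * E - u' / (I * a') * E‖ ≤
      |a|⁻¹ * (‖u - u'‖ * ‖E‖) + |a - a'| * |a|⁻¹ * |a'|⁻¹ * (‖u'‖ * ‖E‖) := by
  have hsplit : u / (I * a) * E - u' / (I * a') * E =
      (u - u') / (I * a) * E + ((a' - a : ℝ) * (a⁻¹ : ℝ) * (a'⁻¹ : ℝ) * u') / I * E := by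
    have : (a : ℂ) ≠ 0 := ofReal_ne_zero.2 ha
    have : (a' : ℂ) ≠ 0 := ofReal_ne_zero.2 ha'
    push_cast
    field_simp
    ring
  rw [hsplit]
  refine (norm_add_le _ _).trans_eq ?_
  rw [norm_div_I_mul]
  simp only [norm_mul, norm_div, norm_I, norm_real, Real.norm_eq_abs, abs_inv, div_one,
    abs_sub_comm a' a, mul_assoc]

end ComplexBounds

def IsDiophantine {d : ℕ} (γ τ : ℝ) (ω : Fin d → ℝ) : Prop :=
  ∀ n : Fin d → ℤ, n ≠ 0 → γ / oneNorm n ^ τ ≤ |dotR ω fun i => (n i : ℝ)|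

namespace IsDiophantine

variable {d : ℕ} {γ τ : ℝ} {ω : Fin d → ℝ} {n : Fin d → ℤ}

lemma abs_dotR_pos (hω : IsDiophantine γ τ ω) (hγ : 0 < γ) (hn : n ≠ 0) :
    0 < |dotR ω fun i => (n i : ℝ)| :=
  (div_pos hγ (rpow_pos_of_pos (by linarith [one_le_oneNorm hn]) τ)).trans_le (hω n hn)

lemma inv_abs_dotR_le (hω : IsDiophantine γ τ ω) (hγ : 0 < γ) (hn : n ≠ 0) :
    |dotR ω fun i => (n i : ℝ)|⁻¹ ≤ oneNorm n ^ τ / γ := by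
  rw [← inv_div]
  exact inv_anti₀ (div_pos hγ (rpow_pos_of_pos (by linarith [one_le_oneNorm hn]) τ)) (hω n hn)

end IsDiophantine

noncomputable def smallDivisorTerm {d : ℕ} (f : (Fin d → ℤ) → (Fin d → ℝ) → ℂ) (x : Fin d → ℂ)
    (ω : Fin d → ℝ) (n : Fin d → ℤ) : ℂ :=
  f n ω / (Complex.I * (dotR ω fun i => (n i : ℝ))) *
    Complex.exp (Complex.I * ∑ i, (n i : ℂ) * x i)

section SmallDivisorTerm

variable {d : ℕ} {f : (Fin d → ℤ) → (Fin d → ℝ) → ℂ} {x : Fin d → ℂ} {ω ω' : Fin d → ℝ}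
  {n : Fin d → ℤ} {γ τ ξ δ m lam : ℝ} {P : ℕ}

lemma norm_mul_norm_cexp_le {u : ℂ} {A : ℝ} (hu : ‖u‖ ≤ A * Real.exp (-(oneNorm n * ξ)))
    (hx : ∀ j, |(x j).im| ≤ ξ - δ) :
    ‖u‖ * ‖Complex.exp (Complex.I * ∑ i, (n i : ℂ) * x i)‖ ≤ A * Real.exp (-(δ * oneNorm n)) :=
  calc _ ≤ A * Real.exp (-(oneNorm n * ξ)) * Real.exp ((ξ - δ) * oneNorm n) :=
        mul_le_mul hu (norm_cexp_I_mul_sum_le n hx) (norm_nonneg _) ((norm_nonneg u).trans hu)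
    _ = A * Real.exp (-(δ * oneNorm n)) := by rw [mul_assoc, ← Real.exp_add]; ring_nf

lemma norm_smallDivisorTerm_le (hτP : τ ≤ P) (hγ : 0 < γ) (hδ : 0 < δ) (hm : 0 ≤ m)
    (hω : IsDiophantine γ τ ω) (hn : n ≠ 0) (hf : ‖f n ω‖ ≤ m * Real.exp (-(oneNorm n * ξ)))
    (hx : ∀ j, |(x j).im| ≤ ξ - δ) :
    ‖smallDivisorTerm f x ω n‖ ≤
      m / γ * (P.factorial * (2 / δ) ^ P) * Real.exp (-(δ / 2 * oneNorm n)) := by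
  have hNτ : 0 ≤ oneNorm n ^ τ := rpow_nonneg (oneNorm_nonneg n) τ
  rw [smallDivisorTerm, norm_div_I_mul]
  calc _ ≤ oneNorm n ^ τ / γ * (m * Real.exp (-(δ * oneNorm n))) :=
        mul_le_mul (hω.inv_abs_dotR_le hγ hn) (norm_mul_norm_cexp_le hf hx) (by positivity)
          (div_nonneg hNτ hγ.le)
    _ = m / γ * (oneNorm n ^ τ * Real.exp (-(δ * oneNorm n))) := by ring
    _ ≤ _ := by
        rw [mul_assoc (m / γ)]
        exact mul_le_mul_of_nonneg_left (rpow_mul_exp_neg_le hτP hδ (one_le_oneNorm hn))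
          (by positivity)

lemma norm_smallDivisorTerm_sub_le (hP : 2 * τ + 1 ≤ P) (hγ : 0 < γ) (hδ : 0 < δ) (hm : 0 ≤ m)
    (hlam : 0 ≤ lam) (hω : IsDiophantine γ τ ω) (hω' : IsDiophantine γ τ ω') (hn : n ≠ 0)
    (hf : ‖f n ω'‖ ≤ m * Real.exp (-(oneNorm n * ξ)))
    (hfl : ‖f n ω - f n ω'‖ ≤ lam * Real.exp (-(oneNorm n * ξ)) * eNorm (ω - ω'))
    (hx : ∀ j, |(x j).im| ≤ ξ - δ) :
    ‖smallDivisorTerm f x ω n - smallDivisorTerm f x ω' n‖ ≤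
      (m + lam * γ) * γ⁻¹ ^ 2 * eNorm (ω - ω') * (P.factorial * (2 / δ) ^ P) *
        Real.exp (-(δ / 2 * oneNorm n)) := by
  set N := oneNorm n
  set D := eNorm (ω - ω')
  have hN : 1 ≤ N := one_le_oneNorm hn
  have hD : 0 ≤ D := eNorm_nonneg _
  have hτP : τ ≤ P := by
    rcases le_or_gt τ 0 with h | h <;> linarith [(Nat.cast_nonneg P : (0 : ℝ) ≤ P)]
  have hNp : N ^ (2 * τ + 1) = N * N ^ τ * N ^ τ := by
    rw [rpow_add (by linarith), rpow_one, two_mul, rpow_add (by linarith)]; ring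
  have hdot : |(dotR ω fun i => (n i : ℝ)) - dotR ω' fun i => (n i : ℝ)| ≤ D * N := by
    rw [← dotR_sub_left]; exact abs_dotR_le _ _
  have hflE := norm_mul_norm_cexp_le (A := lam * D) (by rwa [mul_right_comm] at hfl) hx
  have hinv := hω.inv_abs_dotR_le hγ hn
  have hinv' := hω'.inv_abs_dotR_le hγ hn
  refine (norm_div_I_mul_sub_le _ _ _ (abs_pos.1 (hω.abs_dotR_pos hγ hn))
    (abs_pos.1 (hω'.abs_dotR_pos hγ hn))).trans ?_
  calc _ ≤ N ^ τ / γ * (lam * D * Real.exp (-(δ * N))) +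
        D * N * (N ^ τ / γ) * (N ^ τ / γ) * (m * Real.exp (-(δ * N))) := by
        gcongr ?_ * ?_ + ?_ * ?_ * ?_ * ?_
        exact norm_mul_norm_cexp_le hf hx
    _ = D * γ⁻¹ ^ 2 * (lam * γ * (N ^ τ * Real.exp (-(δ * N))) +
          m * (N ^ (2 * τ + 1) * Real.exp (-(δ * N)))) := by
        rw [hNp]; field_simp
    _ ≤ D * γ⁻¹ ^ 2 * (lam * γ * (P.factorial * (2 / δ) ^ P * Real.exp (-(δ / 2 * N))) +
          m * (P.factorial * (2 / δ) ^ P * Real.exp (-(δ / 2 * N)))) := by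
        gcongr D * γ⁻¹ ^ 2 * (lam * γ * ?_ + m * ?_)
        · exact rpow_mul_exp_neg_le hτP hδ hN
        · exact rpow_mul_exp_neg_le hP hδ hN
    _ = _ := by ring

theorem summable_norm_smallDivisorTerm (hγ : 0 < γ) (hδ : 0 < δ) (hm : 0 ≤ m)
    (hω : IsDiophantine γ τ ω)
    (hf : ∀ n : Fin d → ℤ, n ≠ 0 → ‖f n ω‖ ≤ m * Real.exp (-(oneNorm n * ξ)))
    (hx : ∀ j, |(x j).im| ≤ ξ - δ) :
    Summable fun n : {n : Fin d → ℤ // n ≠ 0} => ‖smallDivisorTerm f x ω n‖ :=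
  (((hasSum_exp_neg_oneNorm d (half_pos hδ)).summable.subtype _).mul_left _).of_nonneg_of_le
    (fun _ => norm_nonneg _)
    fun n => norm_smallDivisorTerm_le (Nat.le_ceil τ) hγ hδ hm hω n.2 (hf n n.2) hx

theorem norm_tsum_smallDivisorTerm_sub_le (hP : 2 * τ + 1 ≤ P) (hγ : 0 < γ) (hδ : 0 < δ)
    (hm : 0 ≤ m) (hlam : 0 ≤ lam) (hω : IsDiophantine γ τ ω) (hω' : IsDiophantine γ τ ω')
    (hf : ∀ n : Fin d → ℤ, n ≠ 0 → ‖f n ω‖ ≤ m * Real.exp (-(oneNorm n * ξ)))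
    (hf' : ∀ n : Fin d → ℤ, n ≠ 0 → ‖f n ω'‖ ≤ m * Real.exp (-(oneNorm n * ξ)))
    (hfl : ∀ n : Fin d → ℤ, n ≠ 0 →
      ‖f n ω - f n ω'‖ ≤ lam * Real.exp (-(oneNorm n * ξ)) * eNorm (ω - ω'))
    (hx : ∀ j, |(x j).im| ≤ ξ - δ) :
    ‖∑' n : {n : Fin d → ℤ // n ≠ 0}, smallDivisorTerm f x ω n -
        ∑' n : {n : Fin d → ℤ // n ≠ 0}, smallDivisorTerm f x ω' n‖ ≤
      (m + lam * γ) * γ⁻¹ ^ 2 * eNorm (ω - ω') * (P.factorial * (2 / δ) ^ P) *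
        (1 + 4 / δ) ^ d := by
  set K := (m + lam * γ) * γ⁻¹ ^ 2 * eNorm (ω - ω') * (P.factorial * (2 / δ) ^ P)
  have hK : 0 ≤ K := by have := eNorm_nonneg (ω - ω'); positivity
  have hsum := (hasSum_exp_neg_oneNorm d (half_pos hδ)).summable
  rw [← (summable_norm_smallDivisorTerm hγ hδ hm hω hf hx).of_norm.tsum_sub
    (summable_norm_smallDivisorTerm hγ hδ hm hω' hf' hx).of_norm]
  calc _ ≤ ∑' n : {n : Fin d → ℤ // n ≠ 0}, K * Real.exp (-(δ / 2 * oneNorm n.1)) :=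
        tsum_of_norm_bounded ((hsum.subtype _).mul_left K).hasSum fun n =>
          norm_smallDivisorTerm_sub_le hP hγ hδ hm hlam hω hω' n.2 (hf' n n.2) (hfl n n.2) hx
    _ = K * ∑' n : {n : Fin d → ℤ // n ≠ 0}, Real.exp (-(δ / 2 * oneNorm n.1)) := tsum_mul_left
    _ ≤ K * (1 + 4 / δ) ^ d := by
        refine mul_le_mul_of_nonneg_left ?_ hK
        calc _ ≤ ∑' n : Fin d → ℤ, Real.exp (-(δ / 2 * oneNorm n)) :=
              hsum.tsum_subtype_le _ {n | n ≠ 0} fun _ => (exp_pos _).le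
          _ ≤ (1 + 2 / (δ / 2)) ^ d := tsum_exp_neg_oneNorm_le d (half_pos hδ)
          _ = (1 + 4 / δ) ^ d := by ring

end SmallDivisorTerm

theorem small_divisor_series_lipschitz_general (d : ℕ) (τ : ℝ) :
    ∃ c k : ℝ, 0 < c ∧ 0 < k ∧
      ∀ (γ ξ δ : ℝ), 0 < γ → 0 < δ → δ < ξ → ξ ≤ 1 →
      ∀ Ω : Set (Fin d → ℝ),
        (Ω ⊆ {ω | ∀ n : Fin d → ℤ, n ≠ 0 →
          γ / oneNorm n ^ τ ≤ |dotR ω (fun i => (n i : ℝ))|}) →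
      ∀ (m lam : ℝ), 0 ≤ m → 0 ≤ lam →
      ∀ f : (Fin d → ℤ) → (Fin d → ℝ) → ℂ,
        (∀ n : Fin d → ℤ, n ≠ 0 → ∀ ω ∈ Ω,
          ‖f n ω‖ ≤ m * Real.exp (-(oneNorm n * ξ))) →
        (∀ n : Fin d → ℤ, n ≠ 0 → ∀ ω ∈ Ω, ∀ ω' ∈ Ω,
          ‖f n ω - f n ω'‖ ≤
            lam * Real.exp (-(oneNorm n * ξ)) * eNorm (ω - ω')) →
      ∀ x : Fin d → ℂ, (∀ j, |(x j).im| ≤ ξ - δ) →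
        (∀ ω ∈ Ω, Summable (fun n : {n : Fin d → ℤ // n ≠ 0} =>
          ‖(f n.1 ω / (Complex.I * (dotR ω fun i => (n.1 i : ℝ))) *
            Complex.exp (Complex.I * ∑ i, (n.1 i : ℂ) * x i))‖)) ∧
        (∀ ω ∈ Ω, ∀ ω' ∈ Ω,
          ‖((∑' n : {n : Fin d → ℤ // n ≠ 0},
              f n.1 ω / (Complex.I * (dotR ω fun i => (n.1 i : ℝ))) *
                Complex.exp (Complex.I * ∑ i, (n.1 i : ℂ) * x i)) -
             (∑' n : {n : Fin d → ℤ // n ≠ 0},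
              f n.1 ω' / (Complex.I * (dotR ω' fun i => (n.1 i : ℝ))) *
                Complex.exp (Complex.I * ∑ i, (n.1 i : ℂ) * x i)))‖ ≤
            c * δ ^ (-k) * γ⁻¹ ^ 2 * (m + lam * γ) * eNorm (ω - ω')) := by
  obtain ⟨P, hP1, hP⟩ : ∃ P : ℕ, 1 ≤ P ∧ 2 * τ + 1 ≤ P :=
    ⟨⌈2 * τ⌉₊ + 1, by omega, by push_cast; linarith [Nat.le_ceil (2 * τ)]⟩
  refine ⟨P.factorial * 2 ^ P * 5 ^ d, (P + d : ℕ), by positivity, Nat.cast_pos.2 (by omega), ?_⟩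
  intro γ ξ δ hγ hδ hδξ hξ1 Ω hΩ m lam hm hlam f hf hfl x hx
  refine ⟨fun ω hω => summable_norm_smallDivisorTerm hγ hδ hm (hΩ hω) (fun n hn => hf n hn ω hω)
    hx, fun ω hω ω' hω' => ?_⟩
  refine (norm_tsum_smallDivisorTerm_sub_le hP hγ hδ hm hlam (hΩ hω) (hΩ hω')
    (fun n hn => hf n hn ω hω) (fun n hn => hf n hn ω' hω') (fun n hn => hfl n hn ω hω ω' hω')
    hx).trans ?_
  have h5 : 1 + 4 / δ ≤ 5 / δ := by
    rw [show (5 : ℝ) / δ = 1 / δ + 4 / δ by ring]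
    gcongr
    exact one_le_one_div hδ (by linarith)
  have hD := eNorm_nonneg (ω - ω')
  calc _ ≤ (m + lam * γ) * γ⁻¹ ^ 2 * eNorm (ω - ω') * (P.factorial * (2 / δ) ^ P) *
        (5 / δ) ^ d := by gcongr
    _ = _ := by
        rw [Real.rpow_neg hδ.le, Real.rpow_natCast, ← inv_pow, pow_add]
        simp only [div_eq_mul_inv, mul_pow]
        ring

/-- Lemma 1(iii): Lipschitz dependence on the Diophantine frequency `ω` of the solution
`F = D_ω⁻¹ f` of the small-divisor equation: if `|f_n(ω)| ≤ m e^(−|n|₁ξ)` and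
`|f_n(ω) − f_n(ω')| ≤ λ e^(−|n|₁ξ)‖ω − ω'‖` on a set `Ω` of `(γ,τ)`-Diophantine vectors,
then `F(x,ω) = Σ_{n≠0} f_n(ω)/(i⟨ω,n⟩) e^(i⟨n,x⟩)` converges absolutely for
`|Im x_j| ≤ ξ − δ` and `|F(x,ω) − F(x,ω')| ≤ c δ^(−k) γ^(−2) (m + λγ) ‖ω − ω'‖` with
`c, k > 0` depending only on `d` and `τ`. -/
theorem small_divisor_series_lipschitz (d : ℕ) (hd : 1 ≤ d) (τ : ℝ) (hτ : 0 < τ) :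
    ∃ c k : ℝ, 0 < c ∧ 0 < k ∧
      ∀ (γ ξ δ : ℝ), 0 < γ → 0 < δ → δ < ξ → ξ ≤ 1 →
      ∀ Ω : Set (Fin d → ℝ),
        (Ω ⊆ {ω | ∀ n : Fin d → ℤ, n ≠ 0 →
          γ / oneNorm n ^ τ ≤ |dotR ω (fun i => (n i : ℝ))|}) →
      ∀ (m lam : ℝ), 0 ≤ m → 0 ≤ lam →
      ∀ f : (Fin d → ℤ) → (Fin d → ℝ) → ℂ,
        (∀ n : Fin d → ℤ, n ≠ 0 → ∀ ω ∈ Ω,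
          ‖f n ω‖ ≤ m * Real.exp (-(oneNorm n * ξ))) →
        (∀ n : Fin d → ℤ, n ≠ 0 → ∀ ω ∈ Ω, ∀ ω' ∈ Ω,
          ‖f n ω - f n ω'‖ ≤
            lam * Real.exp (-(oneNorm n * ξ)) * eNorm (ω - ω')) →
      ∀ x : Fin d → ℂ, (∀ j, |(x j).im| ≤ ξ - δ) →
        (∀ ω ∈ Ω, Summable (fun n : {n : Fin d → ℤ // n ≠ 0} =>
          ‖(f n.1 ω / (Complex.I * (dotR ω fun i => (n.1 i : ℝ))) *
            Complex.exp (Complex.I * ∑ i, (n.1 i : ℂ) * x i))‖)) ∧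
        (∀ ω ∈ Ω, ∀ ω' ∈ Ω,
          ‖((∑' n : {n : Fin d → ℤ // n ≠ 0},
              f n.1 ω / (Complex.I * (dotR ω fun i => (n.1 i : ℝ))) *
                Complex.exp (Complex.I * ∑ i, (n.1 i : ℂ) * x i)) -
             (∑' n : {n : Fin d → ℤ // n ≠ 0},
              f n.1 ω' / (Complex.I * (dotR ω' fun i => (n.1 i : ℝ))) *
                Complex.exp (Complex.I * ∑ i, (n.1 i : ℂ) * x i)))‖ ≤
            c * δ ^ (-k) * γ⁻¹ ^ 2 * (m + lam * γ) * eNorm (ω - ω')) :=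
  small_divisor_series_lipschitz_general d τ
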